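/- arXiv:2007.09730 — 3 statements merged into one kernel-verified Lean document; each statement's English description precedes it below -/
import Mathlib

section
/- Let n ≥ 1, μ, λ ∈ ℝ, t ∈ ℝ, and let ξ ∈ ℝⁿ with ξ ≠ 0. Let A(ξ) = μ‖ξ‖²·Iₙ + (μ+λ)·ξξᵀ. Then the trace of the matrix exponential exp(−t·A(ξ)) equals (n−1)·e^{−tμ‖ξ‖²} + e^{−t(2μ+λ)‖ξ‖²}. -/
/-!
With `P = ξ ξᵀ` and `s = ‖ξ‖²`, the symbol is `μ s I + (μ + λ) P` and `P² = s P`. The scalar part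
commutes with `P`, so it factors out of the exponential as `e^{-tμs}`. Every power `P^(k+1)` is
`s^k P`, whose trace is `s^(k+1)`; summing the exponential series termwise gives
`tr exp(cP) = (n - 1) + e^{cs}`, and `c = -t(μ + λ)` yields the second exponent `-t(2μ + λ)s`.
-/

open Matrix NormedSpace Nat

theorem pow_succ_eq_pow_smul_of_mul_self_eq_smul {R A : Type*} [Monoid R] [Monoid A]
    [MulAction R A] [IsScalarTower R A A] {a : A} {s : R} (h : a * a = s • a) (k : ℕ) :
    a ^ (k + 1) = s ^ k • a := by
  induction k with
  | zero => simp
  | succ k ih => rw [pow_succ, ih, smul_mul_assoc, h, smul_smul, pow_succ]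

section

attribute [local instance] Matrix.linftyOpNormedRing Matrix.linftyOpNormedAlgebra

theorem Matrix.hasSum_trace_exp {𝕂 m : Type*} [RCLike 𝕂] [Fintype m] [DecidableEq m]
    (M : Matrix m m 𝕂) : HasSum (fun k => (k ! : 𝕂)⁻¹ * (M ^ k).trace) (exp M).trace := by
  have h := (exp_series_hasSum_exp' (𝕂 := 𝕂) M).map (traceAddMonoidHom m 𝕂)
    continuous_id.matrix_trace
  simp only [Function.comp_def, traceAddMonoidHom_apply, trace_smul, smul_eq_mul] at h
  exact h

end

theorem Matrix.trace_exp_smul_of_mul_self_eq_smul {m : Type*} [Fintype m] [DecidableEq m]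
    {P : Matrix m m ℝ} {s : ℝ} (hPP : P * P = s • P) (htr : P.trace = s) (c : ℝ) :
    (exp (c • P)).trace = (Fintype.card m - 1) + Real.exp (c * s) := by
  have hterm : ∀ k, (k ! : ℝ)⁻¹ * ((c • P) ^ k).trace
      = (c * s) ^ k / k ! + if k = 0 then (Fintype.card m - 1 : ℝ) else 0 := by
    rintro (_ | k)
    · simp
    · rw [smul_pow, pow_succ_eq_pow_smul_of_mul_self_eq_smul hPP, smul_smul, trace_smul, htr,
        smul_eq_mul, if_neg k.succ_ne_zero, add_zero]
      ring
  have hexp : HasSum (fun k => (c * s) ^ k / k !) (Real.exp (c * s)) := by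
    simpa [Real.exp_eq_exp_ℝ] using expSeries_div_hasSum_exp (c * s)
  rw [add_comm]
  exact (hasSum_trace_exp (c • P)).unique <| (funext hterm) ▸ hexp.add (hasSum_ite_eq 0 _)

theorem Matrix.exp_smul_one_add {m : Type*} [Fintype m] [DecidableEq m] (r : ℝ)
    (B : Matrix m m ℝ) : exp (r • 1 + B) = Real.exp r • exp B := by
  rw [exp_add_of_commute _ _ ((Commute.one_left B).smul_left r), smul_one_eq_diagonal,
    exp_diagonal, Pi.exp_def, ← Real.exp_eq_exp_ℝ, ← smul_one_eq_diagonal, smul_one_mul]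

theorem trace_exp_neg_navier_lame_symbol_general (n : ℕ)
    (μ lam t : ℝ) (ξ : Fin n → ℝ)
    (A : Matrix (Fin n) (Fin n) ℝ)
    (hA : A = Matrix.of fun j k =>
      μ * (∑ m, ξ m ^ 2) * (if j = k then 1 else 0) + (μ + lam) * ξ j * ξ k) :
    (NormedSpace.exp ((-t) • A)).trace
      = ((n : ℝ) - 1) * Real.exp (-(t * μ * ∑ m, ξ m ^ 2))
        + Real.exp (-(t * (2 * μ + lam) * ∑ m, ξ m ^ 2)) := by
  set s := ∑ m, ξ m ^ 2
  have hs : ξ ⬝ᵥ ξ = s := by simp only [dotProduct, s, sq]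
  have hPP : vecMulVec ξ ξ * vecMulVec ξ ξ = s • vecMulVec ξ ξ := by
    rw [vecMulVec_mul_vecMulVec, hs, vecMulVec_smul]
  have hdecomp : (-t) • A = (-(t * μ * s)) • 1 + (-(t * (μ + lam))) • vecMulVec ξ ξ := by
    ext j k
    simp only [hA, Matrix.smul_apply, Matrix.add_apply, of_apply, one_apply, vecMulVec_apply,
      smul_eq_mul]
    split_ifs <;> ring
  rw [hdecomp, exp_smul_one_add, trace_smul,
    trace_exp_smul_of_mul_self_eq_smul hPP (by rw [trace_vecMulVec, hs]), Fintype.card_fin,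
    smul_eq_mul, show -(t * (2 * μ + lam) * s) = -(t * μ * s) + -(t * (μ + lam)) * s by ring,
    Real.exp_add]
  ring

/-- Trace of the heat semigroup symbol of the Navier–Lamé operator:
`Tr exp(-t A(ξ)) = (n-1) e^{-tμ‖ξ‖²} + e^{-t(2μ+λ)‖ξ‖²}`. -/
theorem trace_exp_neg_navier_lame_symbol (n : ℕ) (hn : 1 ≤ n)
    (μ lam t : ℝ) (ξ : Fin n → ℝ) (hξ : ξ ≠ 0)
    (A : Matrix (Fin n) (Fin n) ℝ)
    (hA : A = Matrix.of fun j k =>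
      μ * (∑ m, ξ m ^ 2) * (if j = k then 1 else 0) + (μ + lam) * ξ j * ξ k) :
    (NormedSpace.exp ((-t) • A)).trace
      = ((n : ℝ) - 1) * Real.exp (-(t * μ * ∑ m, ξ m ^ 2))
        + Real.exp (-(t * (2 * μ + lam) * ∑ m, ξ m ^ 2)) :=
  trace_exp_neg_navier_lame_symbol_general n μ lam t ξ A hA
end

section
/- Let n ≥ 1 be an integer, let μ, λ ∈ ℝ satisfy μ > 0 and 2μ + λ > 0, and let ε > 0. Then the function t ↦ ∫_0^ε [ (n−1)·(4πμt)^{−n/2}·e^{−(2s)²/(4μt)} + (4π(2μ+λ)t)^{−n/2}·e^{−(2s)²/(4(2μ+λ)t)} ] ds − (1/4)·[ (n−1)·(4πμt)^{−(n−1)/2} + (4π(2μ+λ)t)^{−(n−1)/2} ] is O(t^{1−n/2}) as t → 0⁺ (with respect to the filter of positive t tending to 0). -/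
/-! The substitution `s ↦ 2s` turns each image kernel into a half-line Gaussian
`(4πct)^{-n/2} e^{-s²/(ct)}`, whose integral over `(0, ∞)` is exactly
`(1/4)(4πct)^{-(n-1)/2}`. The remainder is therefore the Gaussian tail over `(ε, ∞)`, which is
at most `ct/ε` times `(4πct)^{-n/2}`, i.e. `O(t^{1-n/2})`. -/

open Real MeasureTheory Filter Asymptotics Set Topology

theorem integral_Ioi_exp_neg_mul_sq_le {b ε : ℝ} (hb : 0 < b) (hε : 0 < ε) :
    ∫ s in Ioi ε, exp (-b * s ^ 2) ≤ 1 / (b * ε) := by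
  have hbε : 0 < b * ε := mul_pos hb hε
  have hle : ∫ s in Ioi ε, exp (-b * s ^ 2) ≤ ∫ s in Ioi ε, exp (-(b * ε) * s) := by
    refine setIntegral_mono_on (integrable_exp_neg_mul_sq hb).integrableOn
      (integrableOn_exp_mul_Ioi (neg_neg_of_pos hbε) ε) measurableSet_Ioi fun s hs => ?_
    have hs : ε < s := hs
    exact exp_le_exp.2 (by nlinarith [mul_pos hb (mul_pos (hε.trans hs) (sub_pos.2 hs))])
  rw [integral_exp_mul_Ioi (neg_neg_of_pos hbε), neg_div_neg_eq] at hle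
  calc ∫ s in Ioi ε, exp (-b * s ^ 2)
      ≤ exp (-(b * ε) * ε) / (b * ε) := hle
    _ ≤ 1 / (b * ε) := by
        gcongr
        exact exp_le_one_iff.2 (by nlinarith)

theorem integral_Ioc_exp_neg_mul_sq {b ε : ℝ} (hb : 0 < b) (hε : 0 ≤ ε) :
    ∫ s in Ioc 0 ε, exp (-b * s ^ 2) = √(π / b) / 2 - ∫ s in Ioi ε, exp (-b * s ^ 2) := by
  have hint := integrable_exp_neg_mul_sq hb
  rw [← integral_gaussian_Ioi, ← Ioc_union_Ioi_eq_Ioi hε,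
    setIntegral_union (Ioc_disjoint_Ioi le_rfl) measurableSet_Ioi hint.integrableOn
      hint.integrableOn, add_sub_cancel_right]

theorem rpow_neg_div_two_mul_sqrt (n : ℝ) {a : ℝ} (ha : 0 < a) :
    a ^ (-n / 2) * √a = a ^ (-(n - 1) / 2) := by
  rw [sqrt_eq_rpow, ← rpow_add ha]
  ring_nf

/-- The contribution of a single wave speed `√c` (`c = μ` or `c = 2μ + λ`). -/
noncomputable def boundaryLayerRemainder (n c ε t : ℝ) : ℝ :=
  (∫ s in Ioc 0 ε, (4 * π * c * t) ^ (-n / 2) * exp (-(2 * s) ^ 2 / (4 * c * t)))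
    - 1 / 4 * (4 * π * c * t) ^ (-(n - 1) / 2)

theorem boundaryLayerRemainder_eq (n : ℝ) {c ε t : ℝ} (hc : 0 < c) (hε : 0 ≤ ε) (ht : 0 < t) :
    boundaryLayerRemainder n c ε t
      = -((4 * π * c * t) ^ (-n / 2) * ∫ s in Ioi ε, exp (-(c * t)⁻¹ * s ^ 2)) := by
  have hct : 0 < c * t := mul_pos hc ht
  have hexp : ∀ s : ℝ, exp (-(2 * s) ^ 2 / (4 * c * t)) = exp (-(c * t)⁻¹ * s ^ 2) := fun s => by
    congr 1; field_simp; ring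
  have hsqrt : √(π / (c * t)⁻¹) / 2 = √(4 * π * c * t) / 4 := by
    rw [show 4 * π * c * t = 2 ^ 2 * (π / (c * t)⁻¹) by rw [div_inv_eq_mul]; ring,
      sqrt_mul (by norm_num), sqrt_sq (by norm_num)]
    ring
  simp only [boundaryLayerRemainder, hexp, integral_const_mul,
    integral_Ioc_exp_neg_mul_sq (inv_pos.2 hct) hε, hsqrt]
  rw [← rpow_neg_div_two_mul_sqrt n (by positivity : (0 : ℝ) < 4 * π * c * t)]
  ring

theorem isBigO_boundaryLayerRemainder (n : ℝ) {c ε : ℝ} (hc : 0 < c) (hε : 0 < ε) :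
    (fun t => boundaryLayerRemainder n c ε t) =O[𝓝[>] 0] fun t => t ^ (1 - n / 2) := by
  have hkernel : (fun t : ℝ => (4 * π * c * t) ^ (-n / 2)) =O[𝓝[>] 0] fun t => t ^ (-n / 2) :=
    (isBigO_const_mul_self ((4 * π * c) ^ (-n / 2)) _ _).congr'
      (eventually_mem_nhdsWithin.mono fun t (ht : 0 < t) =>
        (mul_rpow (by positivity) ht.le).symm) EventuallyEq.rfl
  have htail : (fun t : ℝ => ∫ s in Ioi ε, exp (-(c * t)⁻¹ * s ^ 2)) =O[𝓝[>] 0] fun t => t := by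
    refine IsBigO.of_bound (c / ε) (eventually_mem_nhdsWithin.mono fun t (ht : 0 < t) => ?_)
    have hct : 0 < c * t := mul_pos hc ht
    rw [norm_of_nonneg (setIntegral_nonneg measurableSet_Ioi fun s _ => (exp_pos _).le),
      norm_of_nonneg ht.le]
    calc ∫ s in Ioi ε, exp (-(c * t)⁻¹ * s ^ 2) ≤ 1 / ((c * t)⁻¹ * ε) :=
          integral_Ioi_exp_neg_mul_sq_le (inv_pos.2 hct) hε
      _ = c / ε * t := by field_simp
  refine (hkernel.mul htail).neg_left.congr' ?_ ?_ <;>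
    filter_upwards [self_mem_nhdsWithin] with t (ht : 0 < t)
  · exact (boundaryLayerRemainder_eq n hc hε.le ht).symm
  · rw [← rpow_add_one ht.ne']
    ring_nf

theorem boundary_layer_contribution_navier_lame_general (n : ℕ)
    (μ lam : ℝ) (hμ : 0 < μ) (hlam : 0 < 2 * μ + lam) (ε : ℝ) (hε : 0 < ε) :
    (fun t : ℝ =>
        (∫ s in Set.Ioc (0 : ℝ) ε,
            (((n : ℝ) - 1) * (4 * π * μ * t) ^ (-(n : ℝ) / 2)
                * Real.exp (-(2 * s) ^ 2 / (4 * μ * t))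
              + (4 * π * (2 * μ + lam) * t) ^ (-(n : ℝ) / 2)
                * Real.exp (-(2 * s) ^ 2 / (4 * (2 * μ + lam) * t))))
          - (1 / 4) * (((n : ℝ) - 1) * (4 * π * μ * t) ^ (-((n : ℝ) - 1) / 2)
              + (4 * π * (2 * μ + lam) * t) ^ (-((n : ℝ) - 1) / 2)))
      =O[nhdsWithin 0 (Set.Ioi 0)] fun t : ℝ => t ^ (1 - (n : ℝ) / 2) := by
  refine (((isBigO_boundaryLayerRemainder n hμ hε).const_mul_left ((n : ℝ) - 1)).add
    (isBigO_boundaryLayerRemainder n hlam hε)).congr_left fun t => ?_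
  have hint : ∀ a c : ℝ,
      IntegrableOn (fun s => a * exp (-(2 * s) ^ 2 / (4 * c * t))) (Ioc 0 ε) :=
    fun a c => Continuous.integrableOn_Ioc (by fun_prop)
  rw [integral_add (hint _ _) (hint _ _), integral_const_mul, integral_const_mul]
  simp only [boundaryLayerRemainder, integral_const_mul]
  ring

/-- Boundary-layer contribution to the heat trace (per unit boundary area):
`∫₀^ε [ (n-1)(4πμt)^{-n/2} e^{-(2s)²/(4μt)} + (4π(2μ+λ)t)^{-n/2} e^{-(2s)²/(4(2μ+λ)t)} ] ds
  = (1/4)[ (n-1)(4πμt)^{-(n-1)/2} + (4π(2μ+λ)t)^{-(n-1)/2} ] + O(t^{1-n/2})` as `t → 0⁺`. -/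
theorem boundary_layer_contribution_navier_lame (n : ℕ) (hn : 1 ≤ n)
    (μ lam : ℝ) (hμ : 0 < μ) (hlam : 0 < 2 * μ + lam) (ε : ℝ) (hε : 0 < ε) :
    (fun t : ℝ =>
        (∫ s in Set.Ioc (0 : ℝ) ε,
            (((n : ℝ) - 1) * (4 * π * μ * t) ^ (-(n : ℝ) / 2)
                * Real.exp (-(2 * s) ^ 2 / (4 * μ * t))
              + (4 * π * (2 * μ + lam) * t) ^ (-(n : ℝ) / 2)
                * Real.exp (-(2 * s) ^ 2 / (4 * (2 * μ + lam) * t))))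
          - (1 / 4) * (((n : ℝ) - 1) * (4 * π * μ * t) ^ (-((n : ℝ) - 1) / 2)
              + (4 * π * (2 * μ + lam) * t) ^ (-((n : ℝ) - 1) / 2)))
      =O[nhdsWithin 0 (Set.Ioi 0)] fun t : ℝ => t ^ (1 - (n : ℝ) / 2) :=
  boundary_layer_contribution_navier_lame_general n μ lam hμ hlam ε hε
end

section
/- Let n ≥ 1 be an integer, let μ, λ ∈ ℝ satisfy μ > 0 and 2μ + λ > 0, and let t > 0. For ξ ∈ ℝⁿ let A(ξ) = μ‖ξ‖²·Iₙ + (μ+λ)·ξξᵀ. Then (2π)^{−n} ∫_{ℝⁿ} trace( exp(−t·A(ξ)) ) dξ = (n−1)/(4πμt)^{n/2} + 1/(4π(2μ+λ)t)^{n/2}, where exp denotes the matrix exponential. -/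
open Real MeasureTheory Matrix
open scoped Nat

/-!
For `ξ ≠ 0` let `Q = ξξᵀ/‖ξ‖²` be the orthogonal projection onto `ℝξ`. Then
`A(ξ) = μ‖ξ‖² (1 - Q) + (2μ+λ)‖ξ‖² Q` is a combination of two complementary idempotents, so
`exp(-t A(ξ)) = e^{-tμ‖ξ‖²} (1 - Q) + e^{-t(2μ+λ)‖ξ‖²} Q`, whose trace is
`(n-1) e^{-tμ‖ξ‖²} + e^{-t(2μ+λ)‖ξ‖²}` since `tr Q = 1`. Each Gaussian `e^{-b‖ξ‖²}` integrates to
`(π/b)^{n/2}`, and `(2π)^{-n} (π/b)^{n/2} = (4πb)^{-n/2}`.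
-/

lemma IsIdempotentElem.smul_one_sub_add_smul_pow {𝕜 R : Type*} [CommSemiring 𝕜] [Ring R]
    [Algebra 𝕜 R] {Q : R} (hQ : IsIdempotentElem Q) (a b : 𝕜) (k : ℕ) :
    (a • (1 - Q) + b • Q) ^ k = a ^ k • (1 - Q) + b ^ k • Q := by
  have hPQ : (1 - Q) * Q = 0 := by rw [sub_mul, one_mul, hQ.eq, sub_self]
  have hQP : Q * (1 - Q) = 0 := by rw [mul_sub, mul_one, hQ.eq, sub_self]
  induction k with
  | zero => simp
  | succ k ih =>
    simp only [pow_succ, ih, add_mul, mul_add, smul_mul_smul_comm, hPQ, hQP, hQ.eq,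
      hQ.one_sub.eq, smul_zero, add_zero, zero_add]

lemma IsIdempotentElem.exp_smul_one_sub_add_smul {𝔸 : Type*} [NormedRing 𝔸] [NormedAlgebra ℝ 𝔸]
    [CompleteSpace 𝔸] {Q : 𝔸} (hQ : IsIdempotentElem Q) (a b : ℝ) :
    NormedSpace.exp (a • (1 - Q) + b • Q) = rexp a • (1 - Q) + rexp b • Q := by
  have hsum (r : ℝ) : HasSum (fun k : ℕ => (k !⁻¹ : ℝ) • r ^ k) (rexp r) := by
    rw [Real.exp_eq_exp_ℝ]
    exact NormedSpace.exp_series_hasSum_exp' r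
  refine (NormedSpace.exp_series_hasSum_exp' (𝕂 := ℝ) _).unique ?_
  convert ((hsum a).smul_const (1 - Q)).add ((hsum b).smul_const Q) using 2 with k
  rw [hQ.smul_one_sub_add_smul_pow, smul_add, smul_smul, smul_smul, smul_eq_mul, smul_eq_mul]

lemma Matrix.exp_smul_one_sub_add_smul_of_isIdempotentElem {m : Type*} [Fintype m]
    [DecidableEq m] {Q : Matrix m m ℝ} (hQ : IsIdempotentElem Q) (a b : ℝ) :
    NormedSpace.exp (a • (1 - Q) + b • Q) = rexp a • (1 - Q) + rexp b • Q :=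
  -- `exp` does not depend on the norm; the operator norm only serves to invoke the Banach lemma.
  open scoped Norms.Operator in hQ.exp_smul_one_sub_add_smul a b

section NavierLame

variable {n : ℕ}

noncomputable def radialProjection (ξ : EuclideanSpace ℝ (Fin n)) : Matrix (Fin n) (Fin n) ℝ :=
  (‖ξ‖ ^ 2)⁻¹ • vecMulVec ξ ξ

lemma dotProduct_ofLp_self (ξ : EuclideanSpace ℝ (Fin n)) : ξ.ofLp ⬝ᵥ ξ.ofLp = ‖ξ‖ ^ 2 := by
  rw [EuclideanSpace.real_norm_sq_eq]
  simp [dotProduct, sq]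

lemma isIdempotentElem_radialProjection {ξ : EuclideanSpace ℝ (Fin n)} (hξ : ξ ≠ 0) :
    IsIdempotentElem (radialProjection ξ) := by
  have hs : ‖ξ‖ ^ 2 ≠ 0 := by positivity
  rw [IsIdempotentElem, radialProjection, smul_mul_smul_comm, vecMulVec_mul_vecMulVec,
    dotProduct_ofLp_self, vecMulVec_smul, smul_smul, mul_assoc, inv_mul_cancel₀ hs, mul_one]

lemma trace_radialProjection {ξ : EuclideanSpace ℝ (Fin n)} (hξ : ξ ≠ 0) :
    (radialProjection ξ).trace = 1 := by
  have hs : ‖ξ‖ ^ 2 ≠ 0 := by positivity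
  rw [radialProjection, trace_smul, trace_vecMulVec, dotProduct_ofLp_self, smul_eq_mul,
    inv_mul_cancel₀ hs]

noncomputable def navierLameSymbol (μ lam : ℝ) (ξ : EuclideanSpace ℝ (Fin n)) :
    Matrix (Fin n) (Fin n) ℝ :=
  Matrix.of fun j k => μ * ‖ξ‖ ^ 2 * (if j = k then 1 else 0) + (μ + lam) * ξ j * ξ k

lemma navierLameSymbol_eq {ξ : EuclideanSpace ℝ (Fin n)} (hξ : ξ ≠ 0) (μ lam : ℝ) :
    navierLameSymbol μ lam ξ = (μ * ‖ξ‖ ^ 2) • (1 - radialProjection ξ)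
      + ((2 * μ + lam) * ‖ξ‖ ^ 2) • radialProjection ξ := by
  have hs : ‖ξ‖ ^ 2 ≠ 0 := by positivity
  ext j k
  simp only [navierLameSymbol, radialProjection, of_apply, Matrix.add_apply, Matrix.smul_apply,
    Matrix.sub_apply, one_apply, vecMulVec_apply, smul_eq_mul]
  field_simp
  split_ifs <;> ring

lemma trace_exp_neg_smul_navierLameSymbol (μ lam t : ℝ) (ξ : EuclideanSpace ℝ (Fin n)) :
    (NormedSpace.exp ((-t) • navierLameSymbol μ lam ξ)).trace
      = ((n : ℝ) - 1) * rexp (-(t * μ) * ‖ξ‖ ^ 2)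
        + rexp (-(t * (2 * μ + lam)) * ‖ξ‖ ^ 2) := by
  rcases eq_or_ne ξ 0 with rfl | hξ
  · have h0 : navierLameSymbol μ lam (0 : EuclideanSpace ℝ (Fin n)) = 0 := by
      ext j k; simp [navierLameSymbol]
    simp [h0]
  rw [navierLameSymbol_eq hξ, smul_add, smul_smul, smul_smul,
    exp_smul_one_sub_add_smul_of_isIdempotentElem (isIdempotentElem_radialProjection hξ),
    trace_add, trace_smul, trace_smul, trace_sub, trace_one, trace_radialProjection hξ,
    Fintype.card_fin]
  simp only [smul_eq_mul, neg_mul, mul_assoc]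
  ring

end NavierLame

section Gaussian

variable {V : Type*} [NormedAddCommGroup V] [InnerProductSpace ℝ V] [FiniteDimensional ℝ V]
  [MeasurableSpace V] [BorelSpace V]

lemma integrable_rexp_neg_mul_sq_norm {b : ℝ} (hb : 0 < b) :
    Integrable fun v : V => rexp (-b * ‖v‖ ^ 2) :=
  .of_integral_ne_zero <| by
    rw [GaussianFourier.integral_rexp_neg_mul_sq_norm hb]
    positivity

lemma two_pi_rpow_neg_finrank_mul_integral_rexp_neg_mul_sq_norm {b : ℝ} (hb : 0 < b) :
    (2 * π) ^ (-(Module.finrank ℝ V : ℝ)) * ∫ v : V, rexp (-b * ‖v‖ ^ 2)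
      = 1 / (4 * π * b) ^ ((Module.finrank ℝ V : ℝ) / 2) := by
  set d : ℝ := (Module.finrank ℝ V : ℝ)
  have h2π : (2 * π) ^ (-d) = ((4 * π ^ 2)⁻¹) ^ (d / 2) := by
    rw [Real.inv_rpow (by positivity), ← Real.rpow_neg (by positivity),
      show 4 * π ^ 2 = (2 * π) ^ (2 : ℝ) by rw [Real.rpow_two]; ring,
      ← Real.rpow_mul (by positivity)]
    ring_nf
  rw [GaussianFourier.integral_rexp_neg_mul_sq_norm hb, h2π,
    ← Real.mul_rpow (by positivity) (by positivity), one_div, ← Real.inv_rpow (by positivity)]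
  congr 1
  field_simp

end Gaussian

theorem integral_trace_exp_navier_lame_symbol_general (n : ℕ)
    (μ lam : ℝ) (hμ : 0 < μ) (hlam : 0 < 2 * μ + lam) (t : ℝ) (ht : 0 < t)
    (A : EuclideanSpace ℝ (Fin n) → Matrix (Fin n) (Fin n) ℝ)
    (hA : ∀ ξ, A ξ = Matrix.of fun j k =>
      μ * ‖ξ‖ ^ 2 * (if j = k then 1 else 0) + (μ + lam) * ξ j * ξ k) :
    (2 * π) ^ (-(n : ℝ))
        * ∫ ξ : EuclideanSpace ℝ (Fin n), (NormedSpace.exp ((-t) • A ξ)).trace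
      = ((n : ℝ) - 1) / (4 * π * μ * t) ^ ((n : ℝ) / 2)
        + 1 / (4 * π * (2 * μ + lam) * t) ^ ((n : ℝ) / 2) := by
  obtain rfl : A = navierLameSymbol μ lam := funext hA
  have hμt : 0 < t * μ := by positivity
  have hlamt : 0 < t * (2 * μ + lam) := by positivity
  have hgauss (b : ℝ) (hb : 0 < b) := two_pi_rpow_neg_finrank_mul_integral_rexp_neg_mul_sq_norm
    (V := EuclideanSpace ℝ (Fin n)) hb
  simp only [trace_exp_neg_smul_navierLameSymbol, finrank_euclideanSpace_fin] at hgauss ⊢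
  rw [integral_add ((integrable_rexp_neg_mul_sq_norm hμt).const_mul _)
    (integrable_rexp_neg_mul_sq_norm hlamt), integral_const_mul, mul_add, mul_left_comm,
    hgauss _ hμt, hgauss _ hlamt]
  ring_nf

/-- The interior heat-trace density of the Euclidean Navier–Lamé operator:
`(2π)⁻ⁿ ∫ Tr exp(-t A(ξ)) dξ = (n-1)/(4πμt)^{n/2} + 1/(4π(2μ+λ)t)^{n/2}`,
where `A(ξ) = μ‖ξ‖² Iₙ + (μ+λ) ξξᵀ`. -/
theorem integral_trace_exp_navier_lame_symbol (n : ℕ) (hn : 1 ≤ n)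
    (μ lam : ℝ) (hμ : 0 < μ) (hlam : 0 < 2 * μ + lam) (t : ℝ) (ht : 0 < t)
    (A : EuclideanSpace ℝ (Fin n) → Matrix (Fin n) (Fin n) ℝ)
    (hA : ∀ ξ, A ξ = Matrix.of fun j k =>
      μ * ‖ξ‖ ^ 2 * (if j = k then 1 else 0) + (μ + lam) * ξ j * ξ k) :
    (2 * π) ^ (-(n : ℝ))
        * ∫ ξ : EuclideanSpace ℝ (Fin n), (NormedSpace.exp ((-t) • A ξ)).trace
      = ((n : ℝ) - 1) / (4 * π * μ * t) ^ ((n : ℝ) / 2)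
        + 1 / (4 * π * (2 * μ + lam) * t) ^ ((n : ℝ) / 2) :=
  integral_trace_exp_navier_lame_symbol_general n μ lam hμ hlam t ht A hA
end
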